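/- arXiv:2208.14850 — 5 statements merged into one kernel-verified Lean document; each statement's English description precedes it below -/
import Mathlib

section
/- Let (α_1, …, α_m) and (β_1, …, β_n) be complementary sequences of integers all ≥ 2. Then there exist vectors u_1, …, u_m, v_1, …, v_n in ℤ^{m+n} such that, with ⟨x, y⟩ = −∑ x_i y_i: ⟨u_i, u_i⟩ = −α_i for all i and ⟨v_j, v_j⟩ = −β_j for all j; ⟨u_i, u_{i+1}⟩ = 1 for 1 ≤ i ≤ m−1 and ⟨v_j, v_{j+1}⟩ = 1 for 1 ≤ j ≤ n−1; ⟨u_i, u_j⟩ = 0 whenever |i−j| ≥ 2 and ⟨v_i, v_j⟩ = 0 whenever |i−j| ≥ 2; and ⟨u_i, v_j⟩ = 0 for all i, j. (In other words, every pair of complementary legs has a lattice embedding.) -/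
/-!
Writing `x, y` for the continued fractions of a complementary pair, `(x - 1) (y - 1) = 1`, and
the bounds `a₁ - 1 < [a₁, …]⁻ ≤ a₁` show that every complementary pair arises from `(2), (2)`
by the moves `(a, (b₁, b')) ↦ ((2, a), (b₁ + 1, b'))` and their mirror images. Embeddings follow
the moves: if a coordinate `f` occurs only in `u₁` and `v₁`, as `-s f` and `s f` with `s = ±1`,
then for a new coordinate `e` the vectors `e + s f` and `v₁ - e` become the new first vectors of
the two legs, and `e` is again such a coordinate.
-/

/-- Negative continued fraction `[a₁, …, aₙ]⁻`. -/
def ncf : List ℚ → ℚ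
  | [] => 0
  | [a] => a
  | a :: b :: l => a - 1 / ncf (b :: l)

/-- Negative continued fraction of a list of integers. -/
def ncfZ (l : List ℤ) : ℚ := ncf (l.map (fun x => (x : ℚ)))

/-- Two sequences of integers, all ≥ 2, are complementary if the reciprocals of their
negative continued fractions sum to 1. -/
def Complementary (a b : List ℤ) : Prop :=
  a ≠ [] ∧ b ≠ [] ∧ (∀ x ∈ a, 2 ≤ x) ∧ (∀ x ∈ b, 2 ≤ x) ∧
    1 / ncfZ a + 1 / ncfZ b = 1

/-- The standard negative definite bilinear form on `ℤ^N`. -/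
def negForm {N : ℕ} (x y : Fin N → ℤ) : ℤ := -∑ i, x i * y i

open Matrix

theorem ncfZ_singleton (a : ℤ) : ncfZ [a] = a := by
  simp [ncfZ, ncf]

theorem ncfZ_cons_cons (a c : ℤ) (l : List ℤ) : ncfZ (a :: c :: l) = a - 1 / ncfZ (c :: l) :=
  rfl

theorem ncfZ_cons_sub (a c : ℤ) (l : List ℤ) : ncfZ ((a - c) :: l) = ncfZ (a :: l) - c := by
  cases l with
  | nil => simp [ncfZ_singleton]
  | cons d l => rw [ncfZ_cons_cons, ncfZ_cons_cons]; push_cast; ring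

theorem ncfZ_mem_Ioc {a : ℤ} {l : List ℤ} (h : ∀ x ∈ a :: l, 2 ≤ x) :
    ncfZ (a :: l) ∈ Set.Ioc ((a : ℚ) - 1) a := by
  induction l generalizing a with
  | nil => simp [ncfZ_singleton]
  | cons c l ih =>
    have hc : (2 : ℚ) ≤ c := by exact_mod_cast h c (by simp)
    obtain ⟨hlo, -⟩ := ih fun x hx => h x (List.mem_cons_of_mem a hx)
    have hinv : 0 < 1 / ncfZ (c :: l) ∧ 1 / ncfZ (c :: l) < 1 :=
      ⟨by apply div_pos <;> linarith, (div_lt_one (by linarith)).2 (by linarith)⟩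
    rw [ncfZ_cons_cons]
    constructor <;> linarith

theorem one_lt_ncfZ {a : ℤ} {l : List ℤ} (h : ∀ x ∈ a :: l, 2 ≤ x) : 1 < ncfZ (a :: l) := by
  have ha : (2 : ℚ) ≤ a := by exact_mod_cast h a (by simp)
  linarith [(ncfZ_mem_Ioc h).1]

theorem ncfZ_cons_cons_lt {a c : ℤ} {l : List ℤ} (h : ∀ x ∈ c :: l, 2 ≤ x) :
    ncfZ (a :: c :: l) < a := by
  have : 0 < 1 / ncfZ (c :: l) := by have := one_lt_ncfZ h; positivity
  rw [ncfZ_cons_cons]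
  linarith

namespace Complementary

variable {a b : List ℤ}

theorem symm (h : Complementary a b) : Complementary b a := by
  obtain ⟨ha, hb, ha2, hb2, hsum⟩ := h
  exact ⟨hb, ha, hb2, ha2, by rw [add_comm, hsum]⟩

theorem sub_one_mul_sub_one (h : Complementary a b) : (ncfZ a - 1) * (ncfZ b - 1) = 1 := by
  obtain ⟨ha, hb, ha2, hb2, hsum⟩ := h
  obtain ⟨p, a, rfl⟩ := List.exists_cons_of_ne_nil ha
  obtain ⟨q, b, rfl⟩ := List.exists_cons_of_ne_nil hb
  have hx := one_lt_ncfZ ha2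
  have hy := one_lt_ncfZ hb2
  field_simp at hsum
  linear_combination -hsum

theorem head_eq_two_or_head_eq_two {p q : ℤ} (h : Complementary (p :: a) (q :: b)) :
    p = 2 ∨ q = 2 := by
  by_contra! hpq
  have hx := (ncfZ_mem_Ioc h.2.2.1).1
  have hy := (ncfZ_mem_Ioc h.2.2.2.1).1
  have hp : (3 : ℚ) ≤ p := by exact_mod_cast (h.2.2.1 p (by simp)).lt_of_ne' hpq.1
  have hq : (3 : ℚ) ≤ q := by exact_mod_cast (h.2.2.2.1 q (by simp)).lt_of_ne' hpq.2
  nlinarith [h.sub_one_mul_sub_one]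

theorem eq_singleton_two (h : Complementary [2] b) : b = [2] := by
  obtain ⟨q, b, rfl⟩ := List.exists_cons_of_ne_nil h.2.1
  have hb := h.2.2.2.1
  have hy : ncfZ (q :: b) = 2 := by
    have := h.sub_one_mul_sub_one
    rw [ncfZ_singleton] at this
    push_cast at this
    linarith
  have hq : q = 2 := by
    have : (q : ℚ) < 3 := by linarith [(ncfZ_mem_Ioc hb).1]
    have : q < 3 := by exact_mod_cast this
    linarith [hb q (by simp)]
  subst hq
  cases b with
  | nil => rfl
  | cons c l =>
    have := ncfZ_cons_cons_lt (a := 2) (List.forall_mem_cons.1 hb).2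
    push_cast at this
    linarith

theorem pop_two {c q : ℤ} {l : List ℤ} (h : Complementary (2 :: c :: l) (q :: b)) :
    Complementary (c :: l) ((q - 1) :: b) := by
  have hcl := (List.forall_mem_cons.1 h.2.2.1).2
  have hqb := h.2.2.2.1
  have hx' := one_lt_ncfZ hcl
  have hprod := h.sub_one_mul_sub_one
  rw [ncfZ_cons_cons] at hprod
  set x' := ncfZ (c :: l)
  set y := ncfZ (q :: b)
  have hy : 2 < y := by
    have : 0 < 1 / x' ∧ 1 / x' < 1 :=
      ⟨by apply div_pos <;> linarith, (div_lt_one (by linarith)).2 hx'⟩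
    push_cast at hprod
    nlinarith
  have hq : 3 ≤ q := by
    have : (2 : ℚ) < q := by linarith [(ncfZ_mem_Ioc hqb).2]
    have : (2 : ℤ) < q := by exact_mod_cast this
    omega
  refine ⟨List.cons_ne_nil _ _, List.cons_ne_nil _ _, hcl, ?_, ?_⟩
  · simp only [List.forall_mem_cons] at hqb ⊢
    exact ⟨by omega, hqb.2⟩
  · have hx0 : x' ≠ 0 := by positivity
    have hy0 : y - 1 ≠ 0 := by linarith
    push_cast at hprod
    field_simp at hprod
    rw [ncfZ_cons_sub, Int.cast_one, div_add_div _ _ hx0 hy0,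
      div_eq_one_iff_eq (mul_ne_zero hx0 hy0)]
    linear_combination -hprod

end Complementary

def chainMatrix {n : ℕ} (α : Fin n → ℤ) : Matrix (Fin n) (Fin n) ℤ :=
  of fun i j => if i = j then α i else if (i : ℕ) + 1 = j ∨ (j : ℕ) + 1 = i then -1 else 0

section chainMatrix

variable {n : ℕ} (α : Fin n → ℤ) (c : ℤ)

theorem chainMatrix_comm (i j : Fin n) : chainMatrix α i j = chainMatrix α j i := by
  simp only [chainMatrix, of_apply, eq_comm (a := i), or_comm]
  split_ifs with h <;> simp [h]

@[simp]
theorem chainMatrix_cons_zero_zero : chainMatrix (vecCons c α) 0 0 = c := by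
  simp [chainMatrix]

@[simp]
theorem chainMatrix_cons_zero_succ (j : Fin n) :
    chainMatrix (vecCons c α) 0 j.succ = if (j : ℕ) = 0 then -1 else 0 := by
  simp [chainMatrix, eq_comm]

@[simp]
theorem chainMatrix_cons_succ_zero (i : Fin n) :
    chainMatrix (vecCons c α) i.succ 0 = if (i : ℕ) = 0 then -1 else 0 := by
  rw [chainMatrix_comm, chainMatrix_cons_zero_succ]

@[simp]
theorem chainMatrix_cons_succ_succ (i j : Fin n) :
    chainMatrix (vecCons c α) i.succ j.succ = chainMatrix α i j := by
  simp [chainMatrix]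

end chainMatrix

structure IsLegEmbedding {m n N : ℕ} (α : Fin m → ℤ) (β : Fin n → ℤ)
    (u : Fin m → Fin N → ℤ) (v : Fin n → Fin N → ℤ) : Prop where
  gram_left : ∀ i j, u i ⬝ᵥ u j = chainMatrix α i j
  gram_right : ∀ i j, v i ⬝ᵥ v j = chainMatrix β i j
  orthogonal : ∀ i j, u i ⬝ᵥ v j = 0

structure IsLinkedAt {m n N : ℕ} (u : Fin m → Fin N → ℤ) (v : Fin n → Fin N → ℤ)
    (k : Fin N) (s : ℤ) : Prop where
  mul_self : s * s = 1
  left : ∀ i, u i k = if (i : ℕ) = 0 then -s else 0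
  right : ∀ j, v j k = if (j : ℕ) = 0 then s else 0

section LegEmbedding

variable {m n N : ℕ} {α : Fin m → ℤ} {β : Fin n → ℤ}

theorem IsLegEmbedding.symm {u : Fin m → Fin N → ℤ} {v : Fin n → Fin N → ℤ}
    (h : IsLegEmbedding α β u v) : IsLegEmbedding β α v u :=
  ⟨h.gram_right, h.gram_left, fun i j => by rw [dotProduct_comm, h.orthogonal]⟩

theorem IsLinkedAt.symm {u : Fin m → Fin N → ℤ} {v : Fin n → Fin N → ℤ} {k : Fin N} {s : ℤ}
    (h : IsLinkedAt u v k s) : IsLinkedAt v u k (-s) :=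
  ⟨by rw [neg_mul_neg, h.mul_self], by simpa using h.right, by simpa using h.left⟩

def extendLeft (u : Fin m → Fin N → ℤ) (k : Fin N) (s : ℤ) : Fin (m + 1) → Fin (N + 1) → ℤ :=
  vecCons (vecCons 1 (Pi.single k s)) fun i => vecCons 0 (u i)

def extendRight (v : Fin (n + 1) → Fin N → ℤ) : Fin (n + 1) → Fin (N + 1) → ℤ :=
  fun j => vecCons (if (j : ℕ) = 0 then -1 else 0) (v j)

theorem isLinkedAt_extend (u : Fin m → Fin N → ℤ) (v : Fin (n + 1) → Fin N → ℤ) (k : Fin N)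
    (s : ℤ) : IsLinkedAt (extendLeft u k s) (extendRight v) 0 (-1) := by
  refine ⟨by norm_num, fun i => ?_, fun j => ?_⟩
  · cases i using Fin.cases <;> simp [extendLeft]
  · simp [extendRight]

theorem IsLegEmbedding.extend {q : ℤ} {u : Fin m → Fin N → ℤ} {v : Fin (n + 1) → Fin N → ℤ}
    (h : IsLegEmbedding α (vecCons (q - 1) β) u v) {k : Fin N} {s : ℤ}
    (hk : IsLinkedAt u v k s) :
    IsLegEmbedding (vecCons 2 α) (vecCons q β) (extendLeft u k s) (extendRight v) := by
  refine ⟨fun i j => ?_, fun i j => ?_, fun i j => ?_⟩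
  · cases i using Fin.cases <;> cases j using Fin.cases <;>
      simp [extendLeft, h.gram_left, hk.left, hk.mul_self]
  · cases i using Fin.cases <;> cases j using Fin.cases <;>
      simp [extendRight, h.gram_right]
  · cases i using Fin.cases <;>
      simp [extendLeft, extendRight, h.orthogonal, hk.right, hk.mul_self, apply_ite₂]

def HasLinkedEmbedding {m n : ℕ} (N : ℕ) (α : Fin m → ℤ) (β : Fin n → ℤ) : Prop :=
  ∃ (u : Fin m → Fin N → ℤ) (v : Fin n → Fin N → ℤ),
    IsLegEmbedding α β u v ∧ ∃ k s, IsLinkedAt u v k s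

namespace HasLinkedEmbedding

theorem symm (h : HasLinkedEmbedding N α β) : HasLinkedEmbedding N β α := by
  obtain ⟨u, v, huv, k, s, hk⟩ := h
  exact ⟨v, u, huv.symm, k, -s, hk.symm⟩

theorem extend {q : ℤ} (h : HasLinkedEmbedding N α (vecCons (q - 1) β)) :
    HasLinkedEmbedding (N + 1) (vecCons 2 α) (vecCons q β) := by
  obtain ⟨u, v, huv, k, s, hk⟩ := h
  exact ⟨_, _, huv.extend hk, 0, -1, isLinkedAt_extend u v k s⟩

-- The move applied to the embedding `v₁ = e` of the pair `(), (1)` in `ℤ¹`.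
theorem two_two : HasLinkedEmbedding 2 ![2] ![2] :=
  HasLinkedEmbedding.extend (q := 2) ⟨![], ![![1]],
    ⟨fun i => i.elim0, fun i j => by fin_cases i; fin_cases j; rfl, fun i => i.elim0⟩,
    0, 1, ⟨rfl, fun i => i.elim0, fun j => by fin_cases j; rfl⟩⟩

end HasLinkedEmbedding

end LegEmbedding

theorem List.get_cons_eq_vecCons {α : Type*} (c : α) (l : List α) :
    (c :: l).get = vecCons c l.get := by
  funext i
  cases i using Fin.cases <;> rfl

theorem Complementary.hasLinkedEmbedding {a b : List ℤ} (h : Complementary a b) :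
    HasLinkedEmbedding (a.length + b.length) a.get b.get := by
  induction hn : a.length + b.length generalizing a b with
  | zero => simp [h.1] at hn
  | succ n ih =>
    have of_head_two : ∀ {a b : List ℤ}, Complementary (2 :: a) b → a.length + b.length = n →
        HasLinkedEmbedding (n + 1) (2 :: a).get b.get := by
      intro a b h hlen
      cases a with
      | nil =>
        obtain rfl := Complementary.eq_singleton_two h
        obtain rfl : n = 1 := by simpa using hlen.symm
        have hget : ([2] : List ℤ).get = ![2] := by funext i; fin_cases i; rfl
        rw [hget]
        exact HasLinkedEmbedding.two_two
      | cons c l =>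
        obtain ⟨q, b, rfl⟩ := List.exists_cons_of_ne_nil h.2.1
        have := ih (Complementary.pop_two h) (by simp at hlen ⊢; omega)
        simp only [List.get_cons_eq_vecCons] at this ⊢
        exact this.extend
    obtain ⟨p, a, rfl⟩ := List.exists_cons_of_ne_nil h.1
    obtain ⟨q, b, rfl⟩ := List.exists_cons_of_ne_nil h.2.1
    rcases Complementary.head_eq_two_or_head_eq_two h with rfl | rfl
    · exact of_head_two h (by simp at hn ⊢; omega)
    · exact (of_head_two h.symm (by simp at hn ⊢; omega)).symm

theorem negForm_eq_neg_dotProduct {N : ℕ} (x y : Fin N → ℤ) : negForm x y = -(x ⬝ᵥ y) :=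
  rfl

theorem complementary_legs_lattice_embedding (a b : List ℤ) (h : Complementary a b) :
    ∃ (u : Fin a.length → Fin (a.length + b.length) → ℤ)
      (v : Fin b.length → Fin (a.length + b.length) → ℤ),
      (∀ i, negForm (u i) (u i) = -a.get i) ∧
      (∀ j, negForm (v j) (v j) = -b.get j) ∧
      (∀ i j : Fin a.length, (j : ℕ) = (i : ℕ) + 1 → negForm (u i) (u j) = 1) ∧
      (∀ i j : Fin b.length, (j : ℕ) = (i : ℕ) + 1 → negForm (v i) (v j) = 1) ∧
      (∀ i j : Fin a.length, (i : ℕ) + 2 ≤ (j : ℕ) ∨ (j : ℕ) + 2 ≤ (i : ℕ) →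
        negForm (u i) (u j) = 0) ∧
      (∀ i j : Fin b.length, (i : ℕ) + 2 ≤ (j : ℕ) ∨ (j : ℕ) + 2 ≤ (i : ℕ) →
        negForm (v i) (v j) = 0) ∧
      (∀ i j, negForm (u i) (v j) = 0) := by
  obtain ⟨u, v, huv, -⟩ := h.hasLinkedEmbedding
  refine ⟨u, v, fun i => ?_, fun j => ?_, fun i j hij => ?_, fun i j hij => ?_, fun i j hij => ?_,
    fun i j hij => ?_, fun i j => by rw [negForm_eq_neg_dotProduct, huv.orthogonal, neg_zero]⟩ <;>
  simp only [negForm_eq_neg_dotProduct, huv.gram_left, huv.gram_right, chainMatrix, of_apply,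
    Fin.ext_iff] <;>
  split_ifs <;> omega
end

section
/- Let (a_1, …, a_m) and (b_1, …, b_n) be complementary sequences of integers all ≥ 2 with n ≥ 2 and b_n = 2. Then a_m ≥ 3, and the sequences (a_1, …, a_{m−1}, a_m − 1) and (b_1, …, b_{n−1}) are complementary. (This is the effect of blowing down the −1 in the linear graph (−a_1, …, −a_m, −1, −b_n, …, −b_1).) -/
/-!
Write `ncfMatrix l = ∏ !![aᵢ, -1; 1, 0] = !![P, R; Q, S]`, so that `[l]⁻ = P / Q`, the
determinant is `1` and appending `c` to `l` multiplies on the right by `!![c, -1; 1, 0]`.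
For entries `≥ 2` we have `0 ≤ Q < P` and `-P < R ≤ 0`. As `P / Q` is in lowest terms,
`a` and `b` are complementary exactly when the first column of `ncfMatrix b` is `(P, P - Q)`,
`(P, Q)` being that of `ncfMatrix a`. Determinant one fixes the second column of `ncfMatrix b`
up to a multiple of the first, and the bounds on `R` force it to be `(-P - R, Q + S - P - R)`.
Now `ncfMatrix (e ++ [2])` has second column minus the first column of `ncfMatrix e`, and
`ncfMatrix (d ++ [m - 1])` has first column `(P + R, Q + S)`, so `d ++ [m - 1]` and `e` are again
complementary, where `a = d ++ [m]` and `b = e ++ [2]`; the same identities rule out `m = 2`.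
-/

def ncfMatrix (l : List ℤ) : Matrix (Fin 2) (Fin 2) ℤ :=
  (l.map fun a => !![a, -1; 1, 0]).prod

section ncfMatrix

variable (a c : ℤ) (l : List ℤ)

lemma ncfMatrix_cons_apply_zero_zero :
    ncfMatrix (a :: l) 0 0 = a * ncfMatrix l 0 0 - ncfMatrix l 1 0 := by
  simp [ncfMatrix, Matrix.mul_apply, sub_eq_add_neg]

lemma ncfMatrix_cons_apply_one_zero : ncfMatrix (a :: l) 1 0 = ncfMatrix l 0 0 := by
  simp [ncfMatrix, Matrix.mul_apply]

lemma ncfMatrix_append_singleton_apply_zero_zero :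
    ncfMatrix (l ++ [c]) 0 0 = c * ncfMatrix l 0 0 + ncfMatrix l 0 1 := by
  simp [ncfMatrix, Matrix.mul_apply, mul_comm]

lemma ncfMatrix_append_singleton_apply_zero_one :
    ncfMatrix (l ++ [c]) 0 1 = -ncfMatrix l 0 0 := by
  simp [ncfMatrix, Matrix.mul_apply]

lemma ncfMatrix_append_singleton_apply_one_zero :
    ncfMatrix (l ++ [c]) 1 0 = c * ncfMatrix l 1 0 + ncfMatrix l 1 1 := by
  simp [ncfMatrix, Matrix.mul_apply, mul_comm]

lemma ncfMatrix_append_singleton_apply_one_one :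
    ncfMatrix (l ++ [c]) 1 1 = -ncfMatrix l 1 0 := by
  simp [ncfMatrix, Matrix.mul_apply]

lemma det_ncfMatrix : (ncfMatrix l).det = 1 := by
  rw [ncfMatrix, ← Matrix.coe_detMonoidHom, map_list_prod]
  simp [List.prod_eq_one]

lemma isCoprime_ncfMatrix : IsCoprime (ncfMatrix l 1 0) (ncfMatrix l 0 0) :=
  ⟨-ncfMatrix l 0 1, ncfMatrix l 1 1, by
    linear_combination (Matrix.det_fin_two _).symm.trans (det_ncfMatrix l)⟩

end ncfMatrix

section Bounds

variable {l : List ℤ}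

lemma ncfMatrix_col_zero_bounds (hl : ∀ x ∈ l, 2 ≤ x) : 0 ≤ ncfMatrix l 1 0 ∧ ncfMatrix l 1 0 < ncfMatrix l 0 0 := by
  induction l with
  | nil => simp [ncfMatrix]
  | cons a t ih =>
    obtain ⟨hQ, hP⟩ := ih fun x hx => hl x (List.mem_cons_of_mem a hx)
    have ha : 2 ≤ a := hl a List.mem_cons_self
    rw [ncfMatrix_cons_apply_zero_zero, ncfMatrix_cons_apply_one_zero]
    constructor <;> nlinarith

lemma ncfMatrix_row_zero_bounds (hl : ∀ x ∈ l, 2 ≤ x) : -ncfMatrix l 0 0 < ncfMatrix l 0 1 ∧ ncfMatrix l 0 1 ≤ 0 := by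
  induction l using List.reverseRecOn with
  | nil => simp [ncfMatrix]
  | append_singleton t c ih =>
    obtain ⟨hR, -⟩ := ih fun x hx => hl x (List.mem_append_left _ hx)
    obtain ⟨hQ, hP⟩ := ncfMatrix_col_zero_bounds fun x hx => hl x (List.mem_append_left _ hx)
    have hc : 2 ≤ c := hl c (by simp)
    rw [ncfMatrix_append_singleton_apply_zero_zero, ncfMatrix_append_singleton_apply_zero_one]
    constructor <;> nlinarith

lemma ncfMatrix_apply_zero_one_neg (hl : ∀ x ∈ l, 2 ≤ x) (hne : l ≠ []) : ncfMatrix l 0 1 < 0 := by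
  have := ncfMatrix_col_zero_bounds fun x hx => hl x (List.mem_of_mem_dropLast hx)
  rw [← List.dropLast_append_getLast hne, ncfMatrix_append_singleton_apply_zero_one]
  linarith

lemma ncfZ_eq_div (hl : ∀ x ∈ l, 2 ≤ x) (hne : l ≠ []) : ncfZ l = ncfMatrix l 0 0 / ncfMatrix l 1 0 := by
  obtain ⟨a, t, rfl⟩ := List.exists_cons_of_ne_nil hne
  induction t generalizing a with
  | nil => simp [ncfZ, ncf, ncfMatrix]
  | cons b t ih =>
    have hbt : ∀ x ∈ b :: t, 2 ≤ x := fun x hx => hl x (List.mem_cons_of_mem a hx)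
    have hP : (0 : ℚ) < ncfMatrix (b :: t) 0 0 := by
      have := ncfMatrix_col_zero_bounds hbt
      exact_mod_cast this.1.trans_lt this.2
    have hstep : ncfZ (a :: b :: t) = a - 1 / ncfZ (b :: t) := rfl
    rw [hstep, ih b hbt (List.cons_ne_nil b t), ncfMatrix_cons_apply_zero_zero a,
      ncfMatrix_cons_apply_one_zero a]
    field_simp
    push_cast
    ring

end Bounds

lemma complementary_iff_ncfMatrix {a b : List ℤ} (ha : a ≠ []) (hb : b ≠ [])
    (Ha : ∀ x ∈ a, 2 ≤ x) (Hb : ∀ x ∈ b, 2 ≤ x) :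
    Complementary a b ↔ ncfMatrix b 0 0 = ncfMatrix a 0 0 ∧
      ncfMatrix b 1 0 = ncfMatrix a 0 0 - ncfMatrix a 1 0 := by
  obtain ⟨hQa, hPa⟩ := ncfMatrix_col_zero_bounds Ha
  obtain ⟨hQb, hPb⟩ := ncfMatrix_col_zero_bounds Hb
  have hPb' : (0 : ℚ) < ncfMatrix b 0 0 := by exact_mod_cast hQb.trans_lt hPb
  unfold Complementary
  rw [ncfZ_eq_div Ha ha, ncfZ_eq_div Hb hb, one_div_div, one_div_div]
  refine ⟨fun ⟨_, _, _, _, h⟩ => ?_, fun ⟨hP, hQ⟩ => ⟨ha, hb, Ha, Hb, ?_⟩⟩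
  · have hcop : IsCoprime (ncfMatrix b 0 0 - ncfMatrix b 1 0) (ncfMatrix b 0 0) := by
      simpa [sub_eq_add_neg, add_comm] using (isCoprime_ncfMatrix b).neg_left.add_mul_left_left 1
    obtain ⟨hnum, hden⟩ := Rat.div_int_inj (by linarith) (by linarith)
      (Int.isCoprime_iff_gcd_eq_one.mp hcop) (Int.isCoprime_iff_gcd_eq_one.mp (isCoprime_ncfMatrix a))
      (by push_cast; rw [sub_div, div_self hPb'.ne', ← h]; ring)
    constructor <;> linarith
  · rw [hP, hQ]
    have hPa' : (0 : ℚ) < ncfMatrix a 0 0 := by exact_mod_cast hQa.trans_lt hPa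
    push_cast
    field_simp
    ring

lemma Matrix.col_one_eq_of_det_eq_one {M N : Matrix (Fin 2) (Fin 2) ℤ} (hM : M.det = 1)
    (hN : N.det = 1) (hP : N 0 0 = M 0 0) (hQ : N 1 0 = M 0 0 - M 1 0)
    (hMR : -M 0 0 < M 0 1 ∧ M 0 1 < 0) (hNR : -M 0 0 < N 0 1 ∧ N 0 1 < 0) :
    N 0 1 = -M 0 0 - M 0 1 ∧ N 1 1 = M 1 1 + M 1 0 - M 0 0 - M 0 1 := by
  rw [Matrix.det_fin_two] at hM hN
  rw [hP, hQ] at hN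
  obtain ⟨k, hk⟩ : M 0 0 ∣ M 0 1 + N 0 1 := by
    have hcop : IsCoprime (M 0 0) (M 1 0) := ⟨M 1 1, -M 0 1, by linear_combination hM⟩
    exact hcop.dvd_of_dvd_mul_left ⟨M 1 1 - N 1 1 + N 0 1, by linear_combination hN - hM⟩
  have hk' : k = -1 := by
    have : -2 < k := by by_contra; nlinarith
    have : k < 0 := by by_contra; nlinarith
    omega
  have hR : N 0 1 = -M 0 0 - M 0 1 := by rw [hk'] at hk; linarith
  refine ⟨hR, mul_left_cancel₀ (by linarith : M 0 0 ≠ 0) ?_⟩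
  rw [hR] at hN
  linear_combination hN - hM

theorem Complementary.blowdown {d e : List ℤ} {m : ℤ} (h : Complementary (d ++ [m]) (e ++ [2]))
    (he : e ≠ []) : 3 ≤ m ∧ Complementary (d ++ [m - 1]) e := by
  obtain ⟨-, -, Ha, Hb, -⟩ := id h
  have Hd : ∀ x ∈ d, 2 ≤ x := fun x hx => Ha x (List.mem_append_left _ hx)
  have He : ∀ x ∈ e, 2 ≤ x := fun x hx => Hb x (List.mem_append_left _ hx)
  have hm : 2 ≤ m := Ha m (by simp)
  obtain ⟨hQd, hPd⟩ := ncfMatrix_col_zero_bounds Hd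
  obtain ⟨hRd, hRd'⟩ := ncfMatrix_row_zero_bounds Hd
  obtain ⟨hRe, -⟩ := ncfMatrix_row_zero_bounds He
  have hRe_neg := ncfMatrix_apply_zero_one_neg He he
  obtain ⟨hP, hQ⟩ := (complementary_iff_ncfMatrix (by simp) (by simp) Ha Hb).mp h
  obtain ⟨hR, hS⟩ := Matrix.col_one_eq_of_det_eq_one (det_ncfMatrix _) (det_ncfMatrix _) hP hQ
    (by rw [ncfMatrix_append_singleton_apply_zero_zero, ncfMatrix_append_singleton_apply_zero_one]
        constructor <;> nlinarith)
    (by rw [← hP, ncfMatrix_append_singleton_apply_zero_zero, ncfMatrix_append_singleton_apply_zero_one]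
        constructor <;> linarith)
  simp only [ncfMatrix_append_singleton_apply_zero_zero, ncfMatrix_append_singleton_apply_zero_one,
    ncfMatrix_append_singleton_apply_one_zero, ncfMatrix_append_singleton_apply_one_one] at hP hQ hR hS
  have hm3 : 3 ≤ m := by
    by_contra! hm2
    nlinarith
  refine ⟨hm3, (complementary_iff_ncfMatrix (by simp) he ?_ He).mpr ?_⟩
  · intro x hx
    rcases List.mem_append.mp hx with hx | hx
    · exact Hd x hx
    · rw [List.mem_singleton.mp hx]; omega
  · rw [ncfMatrix_append_singleton_apply_zero_zero, ncfMatrix_append_singleton_apply_one_zero]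
    constructor <;> linarith

theorem complementary_blowdown (a b : List ℤ) (ha : a ≠ []) (hb : b ≠ [])
    (h : Complementary a b) (hn : 2 ≤ b.length) (hlast : b.getLast hb = 2) :
    3 ≤ a.getLast ha ∧
      Complementary (a.dropLast ++ [a.getLast ha - 1]) b.dropLast := by
  have hb' : b.dropLast ++ [2] = b := hlast ▸ List.dropLast_append_getLast hb
  rw [← List.dropLast_append_getLast ha, ← hb'] at h
  refine h.blowdown (List.ne_nil_of_length_pos ?_)
  rw [List.length_dropLast]
  omega
end

section
/- For every integer l ≥ 0, the sequences (2, (5)^{[l]}) and ((3, 2, 2)^{[l]}, 2) are complementary; that is, 1/[2, 5, …, 5]^- (with l fives) + 1/[3, 2, 2, 3, 2, 2, …, 3, 2, 2, 2]^- (the block 3, 2, 2 repeated l times followed by a final 2) = 1. -/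
/-! Both values are quotients of consecutive terms of the Lucas sequence `u` with
`u (n + 2) = 5 u (n + 1) - u n`: writing `a = u (l + 1)`, `b = u l`, one gets
`[2, 5, …, 5]⁻ = (2a - b)/a` and `[3, 2, 2, …, 3, 2, 2, 2]⁻ = (2a - b)/(a - b)`, whose reciprocals
sum to `(a + (a - b))/(2a - b) = 1`. The second formula holds because prepending `3, 2, 2` acts on
`p/q` as `(7p - 5q)/(3p - 2q)`, which sends `(2a - b)/(a - b)` to `(9a - 2b)/(4a - b)`, the same
expression for the shifted pair `(5a - b, a)`. -/

lemma ncf_cons_of_ne_nil (a : ℚ) {l : List ℚ} (hl : l ≠ []) : ncf (a :: l) = a - 1 / ncf l := by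
  cases l with
  | nil => exact absurd rfl hl
  | cons b t => rfl

lemma ncfZ_cons_of_ne_nil (a : ℤ) {l : List ℤ} (hl : l ≠ []) :
    ncfZ (a :: l) = a - 1 / ncfZ l :=
  -- the cast in `ncfZ` elaborates as a `List` monad bind, whose non-emptiness `simp` states via `∈`
  ncf_cons_of_ne_nil _ (by simpa using List.exists_mem_of_ne_nil l hl)

lemma ncfZ_cons_eq_div (c : ℤ) {l : List ℤ} (hl : l ≠ []) {p q : ℚ} (hp : p ≠ 0)
    (h : ncfZ l = p / q) : ncfZ (c :: l) = (c * p - q) / p := by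
  rw [ncfZ_cons_of_ne_nil c hl, h, one_div_div]
  field_simp

/-- The Lucas sequence `U_n(c, 1)`: `0, 1, c, c² - 1, …`. -/
def lucasU (c : ℤ) : ℕ → ℤ
  | 0 => 0
  | 1 => 1
  | n + 2 => c * lucasU c (n + 1) - lucasU c n

lemma lucasU_add_two (c : ℤ) (n : ℕ) : lucasU c (n + 2) = c * lucasU c (n + 1) - lucasU c n := rfl

lemma lucasU_nonneg_and_lt_succ {c : ℤ} (hc : 2 ≤ c) (n : ℕ) :
    0 ≤ lucasU c n ∧ lucasU c n < lucasU c (n + 1) := by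
  induction n with
  | zero => simp [lucasU]
  | succ n ih =>
    have hrec := lucasU_add_two c n
    constructor
    · omega
    · nlinarith

lemma cast_lucasU_nonneg_and_lt_succ {c : ℤ} (hc : 2 ≤ c) (n : ℕ) :
    (0 : ℚ) ≤ lucasU c n ∧ (lucasU c n : ℚ) < lucasU c (n + 1) := by
  exact_mod_cast lucasU_nonneg_and_lt_succ hc n

lemma ncfZ_cons_replicate {c : ℤ} (hc : 2 ≤ c) (a : ℤ) (n : ℕ) :
    ncfZ (a :: List.replicate n c)
      = (a * lucasU c (n + 1) - lucasU c n : ℚ) / lucasU c (n + 1) := by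
  induction n generalizing a with
  | zero => simp [ncfZ, ncf, lucasU]
  | succ n ih =>
    obtain ⟨hb, hba⟩ := cast_lucasU_nonneg_and_lt_succ hc (n + 1)
    have hpos : (0 : ℚ) < lucasU c (n + 2) := hb.trans_lt hba
    refine ncfZ_cons_eq_div a (by simp) hpos.ne' ?_
    rw [List.replicate_succ, ih c, lucasU_add_two]
    push_cast
    ring

lemma ncfZ_flatten_replicate_three_two_two (l : ℕ) :
    ncfZ ((List.replicate l [(3 : ℤ), 2, 2]).flatten ++ [2])
      = (2 * lucasU 5 (l + 1) - lucasU 5 l : ℚ) / (lucasU 5 (l + 1) - lucasU 5 l) := by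
  induction l with
  | zero => norm_num [ncfZ, ncf, lucasU]
  | succ l ih =>
    obtain ⟨hb, hba⟩ := cast_lucasU_nonneg_and_lt_succ (by norm_num : (2 : ℤ) ≤ 5) l
    have hB : (List.replicate (l + 1) [(3 : ℤ), 2, 2]).flatten ++ [2]
        = 3 :: 2 :: 2 :: ((List.replicate l [(3 : ℤ), 2, 2]).flatten ++ [2]) := by
      simp [List.replicate_succ]
    have h1 := ncfZ_cons_eq_div 2 (by simp) (by linarith) ih
    have h2 := ncfZ_cons_eq_div 2 (by simp) (by push_cast; linarith) h1
    have h3 := ncfZ_cons_eq_div 3 (by simp) (by push_cast; linarith) h2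
    rw [hB, h3, lucasU_add_two]
    push_cast
    congr 1 <;> ring

theorem complementary_two_fives (l : ℕ) :
    Complementary ((2 : ℤ) :: List.replicate l 5)
      ((List.replicate l [(3 : ℤ), 2, 2]).flatten ++ [2]) := by
  refine ⟨by simp, by simp, ?_, ?_, ?_⟩
  · simp +contextual [List.mem_replicate]
  · simp only [List.mem_append, List.mem_flatten, List.mem_replicate, List.mem_cons]
    grind
  · obtain ⟨hb, hba⟩ := cast_lucasU_nonneg_and_lt_succ (by norm_num : (2 : ℤ) ≤ 5) l
    rw [ncfZ_cons_replicate (by norm_num) 2 l, ncfZ_flatten_replicate_three_two_two l]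
    push_cast
    rw [one_div_div, one_div_div, ← add_div, div_eq_one_iff_eq (by linarith)]
    ring
end

section
/- For all integers k ≥ 0 and s ≥ 0, the sequences (3, (k+4)^{[s]}) and (2, (3, (2)^{[k+1]})^{[s]}, 2) are complementary; that is, 1/[3, k+4, …, k+4]^- (with s copies of k+4) + 1/[2, 3, 2, …, 2, 3, 2, …, 2, …, 2]^- (a 2, followed by s blocks each consisting of a 3 followed by k+1 twos, followed by a final 2) = 1. -/
/-!
Writing `w = 1 / [(k+4)^[s]]⁻` (so `0 ≤ w < 1`, with `w = 0` for `s = 0`), the invariant is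
`w + 1 / ([(3, 2^[k+1])^[s], 2]⁻ - 1) = 1`. It propagates in `s` because prepending a `2` to a
continued fraction `x > 1` adds exactly one to `1 / (x - 1)`, so the block `2^[k+1]` turns
`1 - w` into `k + 2 - w`, and the leading `3` then produces `1 - 1 / (k + 4 - w)`. Prepending `3`
and `2` to the two sides of the invariant gives the complementarity.
-/

-- `ncfZ` elaborates its argument through the coercion `List ℤ → List ℚ` of the list monad.
theorem ncfZ_eq_ncf_map (l : List ℤ) : ncfZ l = ncf (l.map Int.cast) := by
  simp only [ncfZ, List.map_id']
  congr 1
  induction l <;> simp_all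

/-- Valid also for `l = []`, since `ncf [] = 0` and `1 / 0 = 0`. -/
theorem ncf_cons (a : ℚ) (l : List ℚ) : ncf (a :: l) = a - 1 / ncf l := by
  cases l <;> simp [ncf]

theorem one_lt_ncf : ∀ {l : List ℚ}, l ≠ [] → (∀ x ∈ l, 2 ≤ x) → 1 < ncf l
  | [a], _, hl => by simp only [ncf]; linarith [hl a (by simp)]
  | a :: b :: l, _, hl => by
    have h := one_lt_ncf (l := b :: l) (by simp) fun x hx => hl x (by simp [hx])
    have : 1 / ncf (b :: l) < 1 := (div_lt_one (by linarith)).2 h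
    rw [ncf_cons]
    linarith [hl a (by simp)]

theorem one_div_ncf_lt_one {l : List ℚ} (hl : ∀ x ∈ l, 2 ≤ x) : 1 / ncf l < 1 := by
  rcases eq_or_ne l [] with rfl | hne
  · simp [ncf]
  · have h := one_lt_ncf hne hl
    exact (div_lt_one (by linarith)).2 h

theorem one_div_ncf_two_cons_sub_one {l : List ℚ} (h : 1 < ncf l) :
    1 / (ncf (2 :: l) - 1) = 1 / (ncf l - 1) + 1 := by
  have h₀ : ncf l ≠ 0 := by positivity
  have h₁ : ncf l - 1 ≠ 0 := by linarith
  rw [ncf_cons, show 2 - 1 / ncf l - 1 = (ncf l - 1) / ncf l by field_simp; ring]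
  field_simp
  ring

theorem one_div_ncf_replicate_two_append_sub_one (m : ℕ) {l : List ℚ} (hne : l ≠ [])
    (hl : ∀ x ∈ l, 2 ≤ x) :
    1 / (ncf (List.replicate m 2 ++ l) - 1) = 1 / (ncf l - 1) + m := by
  induction m with
  | zero => simp
  | succ m ih =>
    have hm : ∀ x ∈ List.replicate m 2 ++ l, (2 : ℚ) ≤ x := by
      simp only [List.mem_append, List.mem_replicate]
      rintro x (⟨-, rfl⟩ | hx)
      exacts [le_rfl, hl x hx]
    rw [List.replicate_succ, List.cons_append,
      one_div_ncf_two_cons_sub_one (one_lt_ncf (by simp [hne]) hm), ih]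
    push_cast
    ring

theorem two_le_of_mem_blocks {R : Type*} [Semiring R] [LinearOrder R] [IsStrictOrderedRing R]
    {k s : ℕ} {x : R}
    (hx : x ∈ (List.replicate s ((3 : R) :: List.replicate (k + 1) 2)).flatten ++ [2]) :
    2 ≤ x := by
  simp only [List.mem_append, List.mem_flatten, List.mem_replicate, List.mem_singleton] at hx
  rcases hx with ⟨_, ⟨-, rfl⟩, hx⟩ | rfl
  · rcases List.mem_cons.1 hx with rfl | hx
    · norm_num
    · exact (List.eq_of_mem_replicate hx).ge
  · exact le_rfl

/-- `(k+4)^[s]` and `(3, 2^[k+1])^[s], 2` with its first entry lowered by one are complementary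
(for `s = 0` in the degenerate sense `1 / ncf [] = 0`). -/
theorem one_div_ncf_replicate_add_one_div_ncf_blocks_sub_one (k s : ℕ) :
    1 / ncf (List.replicate s ((k : ℚ) + 4)) +
      1 / (ncf ((List.replicate s ((3 : ℚ) :: List.replicate (k + 1) 2)).flatten ++ [2]) - 1)
      = 1 := by
  induction s with
  | zero => norm_num [ncf]
  | succ s ih =>
    set t := (List.replicate s ((3 : ℚ) :: List.replicate (k + 1) 2)).flatten ++ [2]
    have ht : ∀ x ∈ t, (2 : ℚ) ≤ x := fun _ => two_le_of_mem_blocks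
    have hk4 : (2 : ℚ) ≤ k + 4 := by linarith [k.cast_nonneg (α := ℚ)]
    have hw : 1 / ncf (List.replicate s ((k : ℚ) + 4)) < 1 :=
      one_div_ncf_lt_one fun _ hx => hk4.trans (List.eq_of_mem_replicate hx).ge
    have hblocks : (List.replicate (s + 1) ((3 : ℚ) :: List.replicate (k + 1) 2)).flatten ++ [2]
        = 3 :: (List.replicate (k + 1) 2 ++ t) := by
      simp [t, List.replicate_succ]
    rw [hblocks, List.replicate_succ, ncf_cons, ncf_cons]
    set w := 1 / ncf (List.replicate s ((k : ℚ) + 4))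
    have hy : 1 / (ncf (List.replicate (k + 1) 2 ++ t) - 1) = k + 2 - w := by
      rw [one_div_ncf_replicate_two_append_sub_one _ (by simp [t]) ht]
      push_cast
      linarith
    have hk : (0 : ℚ) < k + 2 - w := by linarith [k.cast_nonneg (α := ℚ)]
    have hy' : ncf (List.replicate (k + 1) 2 ++ t) = 1 + 1 / (k + 2 - w) := by
      rw [← hy, one_div_one_div, add_sub_cancel]
    rw [hy', show (k : ℚ) + 4 - w = (k + 2 - w) + 2 by ring]
    generalize (k : ℚ) + 2 - w = G at hk ⊢
    have h : 3 - 1 / (1 + 1 / G) - 1 = (G + 2) / (G + 1) := by field_simp; ring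
    rw [h, one_div_div, ← add_div, div_eq_one_iff_eq (by linarith)]
    ring

theorem one_div_ncf_three_cons_add_one_div_ncf_two_cons {a b : List ℚ} (ha : ∀ x ∈ a, 2 ≤ x)
    (h : 1 / ncf a + 1 / (ncf b - 1) = 1) :
    1 / ncf (3 :: a) + 1 / ncf (2 :: b) = 1 := by
  have hw := one_div_ncf_lt_one ha
  rw [ncf_cons, ncf_cons]
  generalize 1 / ncf a = w at h hw ⊢
  have h₁ : 1 - w ≠ 0 := by linarith
  have h₂ : 2 - w ≠ 0 := by linarith
  have hb : ncf b = (2 - w) / (1 - w) := by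
    rw [← eq_sub_iff_add_eq', one_div, inv_eq_iff_eq_inv] at h
    rw [eq_add_of_sub_eq h]
    field_simp
    ring
  have hb' : 2 - 1 / ncf b = (3 - w) / (2 - w) := by
    rw [hb, one_div_div]
    field_simp
    ring
  rw [hb', one_div_div, ← add_div, div_eq_one_iff_eq (by linarith)]
  ring

theorem complementary_three_kplusfours (k s : ℕ) :
    Complementary ((3 : ℤ) :: List.replicate s ((k : ℤ) + 4))
      ((2 : ℤ) :: ((List.replicate s ((3 : ℤ) :: List.replicate (k + 1) 2)).flatten ++ [2])) := by
  refine ⟨List.cons_ne_nil _ _, List.cons_ne_nil _ _, ?_, ?_, ?_⟩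
  · simp only [List.mem_cons, List.mem_replicate]
    rintro x (rfl | ⟨-, rfl⟩) <;> omega
  · exact List.forall_mem_cons.2 ⟨le_rfl, fun _ => two_le_of_mem_blocks⟩
  · have hk4 : (2 : ℚ) ≤ k + 4 := by linarith [k.cast_nonneg (α := ℚ)]
    rw [ncfZ_eq_ncf_map, ncfZ_eq_ncf_map]
    simpa [List.map_flatten] using one_div_ncf_three_cons_add_one_div_ncf_two_cons
      (fun _ hx => hk4.trans (List.eq_of_mem_replicate hx).ge)
      (one_div_ncf_replicate_add_one_div_ncf_blocks_sub_one k s)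
end

section
/- Define the sequence (Q_j) by Q_0 = 1, Q_1 = 2 and Q_{j+2} = 5·Q_{j+1} − Q_j. Then (Q_j + Q_{j+1})² = 7·Q_j·Q_{j+1} − 5 for all j ≥ 0. (Equivalently, Q_j·Q_{j+1} − 5/7 = (Q_j + Q_{j+1})²/7, so the surgery coefficient Q_j·Q_{j+1} − 5/7 has square numerator.) -/
theorem Q_square_numerator (Q : ℕ → ℤ) (h0 : Q 0 = 1) (h1 : Q 1 = 2)
    (hrec : ∀ j, Q (j + 2) = 5 * Q (j + 1) - Q j) :
    ∀ j, (Q j + Q (j + 1)) ^ 2 = 7 * (Q j * Q (j + 1)) - 5 := by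
  intro j
  induction j with
  | zero => rw [h0, h1]; ring
  | succ n ih => rw [hrec n]; nlinarith [ih]
end
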